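/- Let M be a Maya diagram and n ≥ 1 an integer. Then the cardinality of the symmetric difference (M + n) Δ M equals n + 2·∑_{i=0}^{n−1} g_i, where g_i is the genus of the Maya diagram M_i = {m ∈ ℤ : m·n + i ∈ M}. -/

import Mathlib

/-- A Maya diagram: a set of integers containing only finitely many
nonnegative integers and excluding only finitely many negative integers. -/
def IsMaya (M : Set ℤ) : Prop :=
  (M ∩ {k : ℤ | 0 ≤ k}).Finite ∧ ({k : ℤ | k < 0} \ M).Finite

/-- The translate `M + n = {m + n : m ∈ M}`. -/
def mTranslate (M : Set ℤ) (n : ℤ) : Set ℤ := (fun m => m + n) '' M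

/-- The boundary set of `M`: positions `b` such that exactly one of
`b ∈ M`, `b - 1 ∈ M` holds; for a Maya diagram it is finite of odd
cardinality `2g + 1`. -/
def mBoundary (M : Set ℤ) : Set ℤ := {b : ℤ | Xor' (b ∈ M) (b - 1 ∈ M)}

/-- The genus `g` of a Maya diagram, so that `|B(M)| = 2g + 1`. -/
noncomputable def mGenus (M : Set ℤ) : ℕ := ((mBoundary M).ncard - 1) / 2

/-- The `i`-th modular section `M_i = {m : m·n + i ∈ M}` of `M`. -/
def mSect (M : Set ℤ) (n i : ℕ) : Set ℤ := {m : ℤ | m * (n : ℤ) + (i : ℤ) ∈ M}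

/-!
Write `x = m n + i` with `0 ≤ i < n`. Since `x - n = (m - 1) n + i`, the point `x` lies in exactly
one of `M + n` and `M` iff `m` is a boundary point of the section `M_i`. Hence `(M + n) Δ M` is the
disjoint union of the images of the boundaries `B(M_i)` under `m ↦ m n + i`, and each of these has
`2 g_i + 1` elements. The oddness of `|B(N)|` for a Maya diagram `N` is a parity count: along an
interval `(a, b]` with `a ∈ N` and `b ∉ N`, membership in `N` changes an odd number of times.
-/

open Filter

theorem isMaya_iff {N : Set ℤ} :
    IsMaya N ↔ (∀ᶠ k in atBot, k ∈ N) ∧ ∀ᶠ k in atTop, k ∉ N := by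
  constructor
  · rintro ⟨hpos, hneg⟩
    constructor
    · filter_upwards [atBot_le_cofinite hneg.eventually_cofinite_notMem, eventually_lt_atBot 0]
        with k hk hk0
      by_contra hkN
      exact hk ⟨hk0, hkN⟩
    · filter_upwards [atTop_le_cofinite hpos.eventually_cofinite_notMem, eventually_ge_atTop 0]
        with k hk hk0 hkN
      exact hk ⟨hkN, hk0⟩
  · rintro ⟨hbot, htop⟩
    obtain ⟨a, ha⟩ := eventually_atBot.1 hbot
    obtain ⟨b, hb⟩ := eventually_atTop.1 htop
    refine ⟨(Set.finite_Ico 0 b).subset ?_, (Set.finite_Ioo a 0).subset ?_⟩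
    · rintro k ⟨hkN, hk0⟩
      exact ⟨hk0, lt_of_not_ge fun hbk => hb k hbk hkN⟩
    · rintro k ⟨hk0, hkN⟩
      exact ⟨lt_of_not_ge fun hka => hkN (ha k hka), hk0⟩

theorem IsMaya.preimage {N : Set ℤ} (hN : IsMaya N) {f : ℤ → ℤ}
    (hbot : Tendsto f atBot atBot) (htop : Tendsto f atTop atTop) : IsMaya (f ⁻¹' N) := by
  rw [isMaya_iff] at hN ⊢
  exact ⟨hbot.eventually hN.1, htop.eventually hN.2⟩

theorem IsMaya.mSect {M : Set ℤ} (hM : IsMaya M) {n : ℕ} (hn : 0 < n) (i : ℕ) :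
    IsMaya (mSect M n i) :=
  hM.preimage (f := fun m => m * n + i)
    (tendsto_atBot_add_const_right _ _ (tendsto_id.atBot_mul_const' (by positivity)))
    (tendsto_atTop_add_const_right _ _ (tendsto_id.atTop_mul_const' (by positivity)))

theorem mem_mBoundary {N : Set ℤ} {b : ℤ} : b ∈ mBoundary N ↔ ¬(b ∈ N ↔ b - 1 ∈ N) :=
  xor_iff_not_iff _ _

theorem even_ncard_mBoundary_inter_Ioc_iff (N : Set ℤ) {a b : ℤ} (hab : a ≤ b) :
    Even (mBoundary N ∩ Set.Ioc a b).ncard ↔ (b ∈ N ↔ a ∈ N) := by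
  induction b, hab using Int.leInduction with
  | base => simp
  | succ b hab ih =>
    have hIoc : Set.Ioc a (b + 1) = insert (b + 1) (Set.Ioc a b) := by
      ext k
      simp only [Set.mem_Ioc, Set.mem_insert_iff]
      omega
    rw [hIoc]
    by_cases hb : b + 1 ∈ mBoundary N
    · have hnew : b + 1 ∉ mBoundary N ∩ Set.Ioc a b := fun h => by simpa using h.2.2
      rw [Set.inter_insert_of_mem hb, Set.ncard_insert_of_notMem hnew
        ((Set.finite_Ioc a b).inter_of_right _), Nat.even_add_one, ih]
      rw [mem_mBoundary, add_sub_cancel_right] at hb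
      tauto
    · rw [Set.inter_insert_of_notMem hb, ih]
      rw [mem_mBoundary, add_sub_cancel_right] at hb
      tauto

theorem IsMaya.ncard_mBoundary {N : Set ℤ} (hN : IsMaya N) :
    (mBoundary N).ncard = 2 * mGenus N + 1 := by
  obtain ⟨a, ha⟩ := eventually_atBot.1 (isMaya_iff.1 hN).1
  obtain ⟨b, hb⟩ := eventually_atTop.1 (isMaya_iff.1 hN).2
  have hab : a ≤ b := le_of_not_gt fun hba => hb b le_rfl (ha b hba.le)
  have hsub : mBoundary N ⊆ Set.Ioc a b := by
    intro k hk
    by_contra hout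
    rw [Set.mem_Ioc, not_and_or, not_lt, not_le] at hout
    rcases hout with hka | hbk
    · exact mem_mBoundary.1 hk (iff_of_true (ha k hka) (ha (k - 1) (by omega)))
    · exact mem_mBoundary.1 hk (iff_of_false (hb k hbk.le) (hb (k - 1) (by omega)))
  have hodd : Odd (mBoundary N).ncard := by
    rw [← Nat.not_even_iff_odd, ← Set.inter_eq_left.2 hsub,
      even_ncard_mBoundary_inter_Ioc_iff N hab]
    exact fun h => hb b le_rfl (h.2 (ha a le_rfl))
  obtain ⟨g, hg⟩ := hodd
  rw [mGenus, hg]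
  omega

theorem mem_mTranslate {M : Set ℤ} {n x : ℤ} : x ∈ mTranslate M n ↔ x - n ∈ M := by
  simp [mTranslate, sub_eq_add_neg]

theorem mem_mBoundary_mSect {M : Set ℤ} {n i : ℕ} {m : ℤ} :
    m ∈ mBoundary (mSect M n i) ↔ m * n + i ∈ symmDiff (mTranslate M n) M := by
  rw [mem_mBoundary, Set.mem_symmDiff, mem_mTranslate,
    show m * n + i - n = (m - 1) * n + i by ring]
  show ¬(m * n + i ∈ M ↔ (m - 1) * n + i ∈ M) ↔ _
  tauto

theorem symmDiff_mTranslate_eq_biUnion (M : Set ℤ) (n : ℕ) :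
    symmDiff (mTranslate M n) M =
      ⋃ i ∈ (Finset.range n : Set ℕ), (fun m : ℤ => m * n + i) '' mBoundary (mSect M n i) := by
  ext x
  simp only [Set.mem_iUnion, Set.mem_image, mem_mBoundary_mSect, Finset.coe_range, Set.mem_Iio,
    exists_prop]
  constructor
  · intro hx
    have hn : (0 : ℤ) < n := by
      refine lt_of_le_of_ne (by positivity) fun hn => ?_
      simp [← hn, mTranslate] at hx
    have hi := Int.toNat_of_nonneg (Int.emod_nonneg x hn.ne')
    refine ⟨(x % n).toNat, by have := Int.emod_lt_of_pos x hn; omega, x / n, ?_⟩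
    rw [hi, Int.ediv_mul_add_emod]
    exact ⟨hx, rfl⟩
  · rintro ⟨i, -, m, hm, rfl⟩
    exact hm

theorem pairwiseDisjoint_image_mul_add (n : ℕ) (S : ℕ → Set ℤ) :
    (Finset.range n : Set ℕ).PairwiseDisjoint fun i => (fun m : ℤ => m * n + i) '' S i := by
  intro i hi j hj hij
  rw [Function.onFun, Set.disjoint_left]
  rintro _ ⟨m, -, rfl⟩ ⟨m', -, hm⟩
  have hi : i < n := Finset.mem_range.1 hi
  have hj : j < n := Finset.mem_range.1 hj
  have hmod : ∀ k : ℕ, k < n → ∀ q : ℤ, (q * n + k) % n = k := fun k hk q =>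
    ((Int.ediv_emod_unique (a := q * n + k) (q := q) (by omega)).2
      ⟨by ring, by omega, by omega⟩).2
  apply hij
  have := congrArg (· % (n : ℤ)) hm
  simp only [hmod i hi, hmod j hj] at this
  omega

theorem card_symmDiff_translate_general (M : Set ℤ) (n : ℕ) (hM : IsMaya M) :
    (symmDiff (mTranslate M (n : ℤ)) M).ncard =
      n + 2 * ∑ i ∈ Finset.range n, mGenus (mSect M n i) := by
  have hcard : ∀ i ∈ Finset.range n,
      ((fun m : ℤ => m * n + i) '' mBoundary (mSect M n i)).ncard =
        2 * mGenus (mSect M n i) + 1 := by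
    intro i hi
    have hn : 0 < n := by have := Finset.mem_range.1 hi; omega
    have hinj : Function.Injective fun m : ℤ => m * n + i :=
      fun _ _ h => mul_right_cancel₀ (by omega) (add_right_cancel h)
    rw [Set.ncard_image_of_injective _ hinj]
    exact (hM.mSect hn i).ncard_mBoundary
  have hfin : ∀ i ∈ Finset.range n,
      ((fun m : ℤ => m * n + i) '' mBoundary (mSect M n i)).Finite :=
    fun i hi => Set.finite_of_ncard_ne_zero (by rw [hcard i hi]; omega)
  rw [symmDiff_mTranslate_eq_biUnion, (Finset.range n).finite_toSet.ncard_biUnion hfin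
    (pairwiseDisjoint_image_mul_add n _), finsum_mem_coe_finset, Finset.sum_congr rfl hcard,
    Finset.sum_add_distrib, ← Finset.mul_sum]
  simp [add_comm]

theorem card_symmDiff_translate (M : Set ℤ) (n : ℕ) (hM : IsMaya M)
    (hn : 1 ≤ n) :
    (symmDiff (mTranslate M (n : ℤ)) M).ncard =
      n + 2 * ∑ i ∈ Finset.range n, mGenus (mSect M n i) :=
  card_symmDiff_translate_general M n hM
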